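/- Let N ∈ ℕ, q ∈ {1,…,N}, and let U ∈ ℂ^{N×q} satisfy U*U = I. Suppose W ∈ (0, 1/2) with W ≥ 1/(4πN). Then for every f ∈ [−W, W], ‖e_f − UU*e_f‖₂² / ‖e_f‖₂² ≤ max( 2√π · √(∫_{−W}^{W} ‖e_g − UU*e_g‖₂² dg), (1/(NW)) · ∫_{−W}^{W} ‖e_g − UU*e_g‖₂² dg ). -/

import Mathlib

/-!
Write `R(f) = ‖(1 - UUᴴ) e_f‖²`. Differentiating, `e_f' = 2πi (n e_f[n])ₙ`; after centering the
frequencies at `N/2` the remaining term `πiN (1 - UUᴴ) e_f` is orthogonal (over `ℝ`) to the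
residual, so Cauchy–Schwarz and the contractivity of the projection `1 - UUᴴ` give
`|R'| ≤ 2πN^{3/2} √R`. Hence `√R` is `πN^{3/2}`-Lipschitz and
`R(g) ≥ R(f) - 2πN^{3/2} √R(f) |g - f|`. Integrating this over a subinterval of `[-W, W]` of
length `τ ≤ 2W` containing `f`, with `τ = 2W` or `τ = √R(f) / (2πN^{3/2})`, yields
`R(f)² ≤ 4πN² ∫_{-W}^{W} R`, which is the first term of the maximum since `‖e_f‖² = N`.
-/

open Matrix MeasureTheory
open scoped Real

noncomputable section

/-- sampled complex exponential `e_f`. -/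
def eVec (N : ℕ) (f : ℝ) : Fin N → ℂ :=
  fun n => Complex.exp (2 * (Real.pi : ℂ) * (f : ℂ) * ((n : ℕ) : ℂ) * Complex.I)

/-- squared residual `‖e_f − P e_f‖₂²`. -/
def residP {N : ℕ} (P : Matrix (Fin N) (Fin N) ℂ) (f : ℝ) : ℝ :=
  ∑ n, ‖(eVec N f - P.mulVec (eVec N f)) n‖ ^ 2

open Set Filter Topology intervalIntegral
open scoped InnerProductSpace

theorem sqrt_sub_mul_abs_le_sqrt {R : ℝ → ℝ} {K : ℝ} (hR : Differentiable ℝ R)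
    (hR0 : ∀ x, 0 ≤ R x) (hK : 0 ≤ K) (hderiv : ∀ x, |deriv R x| ≤ 2 * K * √(R x)) (x y : ℝ) :
    √(R x) - K * |y - x| ≤ √(R y) := by
  -- `√R` need not be differentiable where `R = 0`, so bound `√(R + ε)` and let `ε → 0`.
  have hlip : ∀ ε > 0, √(R x + ε) ≤ √(R y + ε) + K * |y - x| := by
    intro ε hε
    have hpos : ∀ z, 0 < R z + ε := fun z => by linarith [hR0 z]
    have hF : ∀ z ∈ univ, HasDerivWithinAt (fun z => √(R z + ε))
        (deriv R z / (2 * √(R z + ε))) univ z := fun z _ =>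
      (((hR z).hasDerivAt.add_const ε).sqrt (hpos z).ne').hasDerivWithinAt
    have hbound : ∀ z ∈ univ, ‖deriv R z / (2 * √(R z + ε))‖ ≤ K := by
      intro z _
      have hsq : 0 < √(R z + ε) := Real.sqrt_pos.2 (hpos z)
      rw [Real.norm_eq_abs, abs_div, abs_of_pos (by positivity : (0 : ℝ) < 2 * √(R z + ε)),
        div_le_iff₀ (by positivity)]
      calc |deriv R z| ≤ 2 * K * √(R z) := hderiv z
        _ ≤ 2 * K * √(R z + ε) := by gcongr; linarith
        _ = K * (2 * √(R z + ε)) := by ring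
    have := convex_univ.norm_image_sub_le_of_norm_hasDerivWithin_le hF hbound (mem_univ y)
      (mem_univ x)
    rw [Real.norm_eq_abs, Real.norm_eq_abs, abs_sub_comm x] at this
    linarith [le_abs_self (√(R x + ε) - √(R y + ε))]
  have hlim : Tendsto (fun ε => √(R y + ε) + K * |y - x|) (𝓝[>] 0)
      (𝓝 (√(R y) + K * |y - x|)) := by
    have : Continuous (fun ε => √(R y + ε) + K * |y - x|) := by fun_prop
    simpa using (this.tendsto 0).mono_left nhdsWithin_le_nhds
  have := ge_of_tendsto hlim (eventually_nhdsWithin_of_forall fun ε (hε : 0 < ε) =>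
    (Real.sqrt_le_sqrt (by linarith : R x ≤ R x + ε)).trans (hlip ε hε))
  linarith

theorem sub_mul_sqrt_mul_abs_le {R : ℝ → ℝ} {K : ℝ} (hR : Differentiable ℝ R)
    (hR0 : ∀ x, 0 ≤ R x) (hK : 0 ≤ K) (hderiv : ∀ x, |deriv R x| ≤ 2 * K * √(R x)) (x y : ℝ) :
    R x - 2 * K * √(R x) * |y - x| ≤ R y := by
  have h := sqrt_sub_mul_abs_le_sqrt hR hR0 hK hderiv x y
  have hx := Real.sq_sqrt (hR0 x)
  have hy := Real.sq_sqrt (hR0 y)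
  have hd : 0 ≤ K * |y - x| := by positivity
  have hs : 0 ≤ √(R x) := Real.sqrt_nonneg _
  rcases le_total (K * |y - x|) √(R x) with hle | hle
  · nlinarith [mul_le_mul h h (by linarith) (Real.sqrt_nonneg _)]
  · nlinarith

theorem integral_abs_sub_le {a b x : ℝ} (hx : x ∈ Icc a b) :
    ∫ y in a..b, |y - x| ≤ (b - a) ^ 2 / 2 := by
  have hc : Continuous fun y : ℝ => |y - x| := by fun_prop
  have hleft : ∫ y in a..x, |y - x| = ∫ y in a..x, (x - y) :=
    integral_congr fun y hy => by
      rw [uIcc_of_le hx.1] at hy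
      rw [abs_of_nonpos (sub_nonpos.2 hy.2), neg_sub]
  have hright : ∫ y in x..b, |y - x| = ∫ y in x..b, (y - x) :=
    integral_congr fun y hy => by
      rw [uIcc_of_le hx.2] at hy
      rw [abs_of_nonneg (sub_nonneg.2 hy.1)]
  rw [← integral_add_adjacent_intervals (hc.intervalIntegrable a x) (hc.intervalIntegrable x b),
    hleft, hright, integral_comp_sub_left (fun y => y), integral_comp_sub_right (fun y => y),
    sub_self, integral_id, integral_id]
  nlinarith [mul_nonneg (sub_nonneg.2 hx.1) (sub_nonneg.2 hx.2)]

theorem mul_sub_le_integral {R : ℝ → ℝ} {K a b x : ℝ} (hR : Differentiable ℝ R)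
    (hR0 : ∀ x, 0 ≤ R x) (hK : 0 ≤ K) (hderiv : ∀ x, |deriv R x| ≤ 2 * K * √(R x))
    (hx : x ∈ Icc a b) :
    (b - a) * R x - K * √(R x) * (b - a) ^ 2 ≤ ∫ y in a..b, R y := by
  have hc : Continuous fun y => |y - x| := by fun_prop
  have hKR : 0 ≤ K * √(R x) := by positivity
  calc (b - a) * R x - K * √(R x) * (b - a) ^ 2
      ≤ (b - a) * R x - 2 * K * √(R x) * ∫ y in a..b, |y - x| := by
        nlinarith [integral_abs_sub_le hx]
    _ = ∫ y in a..b, (R x - 2 * K * √(R x) * |y - x|) := by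
        rw [intervalIntegral.integral_sub intervalIntegrable_const
            ((hc.intervalIntegrable a b).const_mul _),
          intervalIntegral.integral_const, intervalIntegral.integral_const_mul, smul_eq_mul]
    _ ≤ ∫ y in a..b, R y :=
        integral_mono_on (hx.1.trans hx.2)
          (intervalIntegrable_const.sub ((hc.intervalIntegrable a b).const_mul _))
          (hR.continuous.intervalIntegrable a b)
          fun y _ => sub_mul_sqrt_mul_abs_le hR hR0 hK hderiv x y

theorem mul_sub_le_integral_of_le_two_mul {R : ℝ → ℝ} {K W x τ : ℝ} (hR : Differentiable ℝ R)
    (hR0 : ∀ x, 0 ≤ R x) (hK : 0 ≤ K) (hderiv : ∀ x, |deriv R x| ≤ 2 * K * √(R x))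
    (hx : x ∈ Icc (-W) W) (hτ : τ ∈ Icc 0 (2 * W)) :
    τ * R x - K * √(R x) * τ ^ 2 ≤ ∫ y in (-W)..W, R y := by
  set a := max (-W) (x - τ)
  have hxa : x ∈ Icc a (a + τ) :=
    ⟨max_le hx.1 (by linarith [hτ.1]), by linarith [le_max_right (-W) (x - τ)]⟩
  have hW : a + τ ≤ W := by
    rcases max_choice (-W) (x - τ) with h | h <;> simp only [a, h] <;> linarith [hx.2, hτ.2]
  calc τ * R x - K * √(R x) * τ ^ 2 ≤ ∫ y in a..(a + τ), R y := by
        simpa using mul_sub_le_integral hR hR0 hK hderiv hxa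
    _ ≤ ∫ y in (-W)..W, R y :=
        integral_mono_interval (le_max_left _ _) (by linarith [hτ.1]) hW
          (Eventually.of_forall hR0) (hR.continuous.intervalIntegrable _ _)

theorem sq_sq_le_of_forall_mul_sub_le {s K c N W A : ℝ} (hc : 0 < c) (hs : 0 ≤ s)
    (hsN : s ^ 2 ≤ N) (hKs : K * s ≤ c * N ^ 2) (hW0 : 0 ≤ W) (hW : 1 / (4 * c * N) ≤ W)
    (hA : ∀ τ ∈ Icc 0 (2 * W), τ * s ^ 2 - K * s * τ ^ 2 ≤ A) :
    (s ^ 2) ^ 2 ≤ 4 * c * N ^ 2 * A := by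
  rcases hs.eq_or_lt with rfl | hs
  · have := hA 0 ⟨le_rfl, by linarith⟩
    norm_num at this ⊢
    positivity
  have hN : 0 < N := (pow_pos hs 2).trans_le hsN
  have hNW : 1 ≤ 4 * c * N * W := by rwa [div_le_iff₀' (by positivity)] at hW
  rcases le_or_gt (4 * K * W) s with hKW | hKW
  · have hA' := hA (2 * W) ⟨by linarith, le_rfl⟩
    have hWA : W * s ^ 2 ≤ A := by
      nlinarith [mul_le_mul_of_nonneg_right hKW (by positivity : 0 ≤ s * W)]
    calc (s ^ 2) ^ 2 = s ^ 2 * s ^ 2 := sq _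
      _ ≤ N * s ^ 2 := by gcongr
      _ ≤ (4 * c * N * W) * (N * s ^ 2) := le_mul_of_one_le_left (by positivity) hNW
      _ = 4 * c * N ^ 2 * (W * s ^ 2) := by ring
      _ ≤ 4 * c * N ^ 2 * A := by gcongr
  · have hK : 0 < K := by nlinarith
    have hA' := hA (s / (2 * K)) ⟨by positivity, by rw [div_le_iff₀ (by positivity)]; linarith⟩
    have hsA : s ^ 3 / (4 * K) ≤ A := by
      convert hA' using 1; field_simp; ring
    calc (s ^ 2) ^ 2 = (K * s) * (4 * (s ^ 3 / (4 * K))) := by field_simp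
      _ ≤ c * N ^ 2 * (4 * A) := by gcongr
      _ = 4 * c * N ^ 2 * A := by ring

theorem abs_sum_real_inner_le {ι F : Type*} [Fintype ι] [NormedAddCommGroup F]
    [InnerProductSpace ℝ F] (v w : ι → F) :
    |∑ i, ⟪v i, w i⟫_ℝ| ≤ √(∑ i, ‖v i‖ ^ 2) * √(∑ i, ‖w i‖ ^ 2) :=
  (Finset.abs_sum_le_sum_abs _ _).trans <|
    (Finset.sum_le_sum fun i _ => abs_real_inner_le_norm (v i) (w i)).trans
      (Real.sum_mul_le_sqrt_mul_sqrt _ _ _)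

section

variable {m n : Type*} [Fintype n]

theorem Matrix.sum_norm_sq_mulVec_le {Q : Matrix n n ℂ} (hQ : Qᴴ * Q = Q) (x : n → ℂ) :
    ∑ i, ‖(Q *ᵥ x) i‖ ^ 2 ≤ ∑ i, ‖x i‖ ^ 2 := by
  set X : EuclideanSpace ℂ n := WithLp.toLp 2 x
  set Y : EuclideanSpace ℂ n := WithLp.toLp 2 (Q *ᵥ x)
  have hYX : ⟪Y, Y⟫_ℂ = ⟪X, Y⟫_ℂ := by
    simp only [X, Y, EuclideanSpace.inner_toLp_toLp, star_mulVec]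
    rw [dotProduct_comm, ← dotProduct_mulVec, mulVec_mulVec, hQ, dotProduct_comm]
  have hY : ‖Y‖ ^ 2 ≤ ‖X‖ * ‖Y‖ := by
    rw [← inner_self_eq_norm_sq (𝕜 := ℂ), hYX]
    exact re_inner_le_norm X Y
  have : ‖Y‖ ≤ ‖X‖ := by
    rcases (norm_nonneg Y).eq_or_lt with h | h
    · rw [← h]; exact norm_nonneg X
    · nlinarith
  simpa [X, Y, EuclideanSpace.norm_sq_eq] using pow_le_pow_left₀ (norm_nonneg Y) this 2

theorem Matrix.conjTranspose_mul_self_one_sub_mul_conjTranspose {q : Type*} [Fintype q]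
    [DecidableEq n] [DecidableEq q] {U : Matrix n q ℂ} (hU : Uᴴ * U = 1) :
    (1 - U * Uᴴ)ᴴ * (1 - U * Uᴴ) = 1 - U * Uᴴ := by
  have : U * Uᴴ * (U * Uᴴ) = U * Uᴴ := by
    rw [Matrix.mul_assoc, ← Matrix.mul_assoc Uᴴ, hU, Matrix.one_mul]
  simp [conjTranspose_sub, sub_mul, mul_sub, this]

theorem HasDerivAt.matrix_mulVec [Fintype m] {v : ℝ → n → ℂ} {v' : n → ℂ} {t : ℝ}
    (Q : Matrix m n ℂ) (hv : HasDerivAt v v' t) :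
    HasDerivAt (fun t => Q *ᵥ v t) (Q *ᵥ v') t :=
  hasDerivAt_pi.2 fun i => HasDerivAt.fun_sum fun j _ => (hasDerivAt_pi.1 hv j).const_mul (Q i j)

theorem HasDerivAt.sum_norm_sq {v : ℝ → n → ℂ} {v' : n → ℂ} {t : ℝ} (hv : HasDerivAt v v' t) :
    HasDerivAt (fun t => ∑ i, ‖v t i‖ ^ 2) (∑ i, 2 * ⟪v t i, v' i⟫_ℝ) t :=
  HasDerivAt.fun_sum fun i _ => (hasDerivAt_pi.1 hv i).norm_sq

end

theorem norm_eVec_apply (N : ℕ) (f : ℝ) (n : Fin N) : ‖eVec N f n‖ = 1 := by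
  rw [eVec, Complex.norm_exp]
  simp [Complex.mul_re, Complex.mul_im]

theorem sum_sq_norm_eVec (N : ℕ) (f : ℝ) : ∑ n, ‖eVec N f n‖ ^ 2 = N := by
  simp [norm_eVec_apply]

theorem hasDerivAt_eVec (N : ℕ) (f : ℝ) :
    HasDerivAt (eVec N) (fun n => 2 * π * Complex.I * (n : ℕ) * eVec N f n) f := by
  refine hasDerivAt_pi.2 fun n => ?_
  have hfun : (fun g : ℝ => eVec N g n) =
      fun g : ℝ => Complex.exp (g * (2 * π * Complex.I * n)) := by
    funext g; simp only [eVec]; congr 1; ring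
  rw [hfun]
  refine ((hasDerivAt_id f).ofReal_comp.mul_const _).cexp.congr_deriv ?_
  simp only [eVec, id, Complex.ofReal_one]; ring_nf

theorem residP_eq_sum_norm_sq_mulVec {N : ℕ} (P : Matrix (Fin N) (Fin N) ℂ) (f : ℝ) :
    residP P f = ∑ n, ‖((1 - P) *ᵥ eVec N f) n‖ ^ 2 := by
  simp [residP, sub_mulVec]

theorem residP_le {N : ℕ} {P : Matrix (Fin N) (Fin N) ℂ} (hP : (1 - P)ᴴ * (1 - P) = 1 - P)
    (f : ℝ) : residP P f ≤ N := by
  rw [residP_eq_sum_norm_sq_mulVec, ← sum_sq_norm_eVec N f]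
  exact sum_norm_sq_mulVec_le hP _

theorem hasDerivAt_residP {N : ℕ} (P : Matrix (Fin N) (Fin N) ℂ) (f : ℝ) :
    HasDerivAt (residP P) (∑ n : Fin N, 2 * ⟪((1 - P) *ᵥ eVec N f) n,
      ((1 - P) *ᵥ (fun n : Fin N => 2 * π * Complex.I * (n : ℕ) * eVec N f n)) n⟫_ℝ) f := by
  rw [show residP P = _ from funext (residP_eq_sum_norm_sq_mulVec P)]
  exact ((hasDerivAt_eVec N f).matrix_mulVec _).sum_norm_sq

theorem abs_deriv_residP_le {N : ℕ} {P : Matrix (Fin N) (Fin N) ℂ}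
    (hP : (1 - P)ᴴ * (1 - P) = 1 - P) (c f : ℝ) :
    |deriv (residP P) f| ≤ 4 * π * √(∑ n : Fin N, ((n : ℝ) - c) ^ 2) * √(residP P f) := by
  set v := (1 - P) *ᵥ eVec N f
  set u := (1 - P) *ᵥ (fun n : Fin N => 2 * π * Complex.I * (((n : ℝ) - c : ℝ) : ℂ) * eVec N f n)
  have hsplit : ((1 - P) *ᵥ (fun n : Fin N => 2 * π * Complex.I * (n : ℕ) * eVec N f n))
      = u + (((2 * π * c : ℝ) : ℂ) * Complex.I) • v := by
    simp only [u, v, ← mulVec_smul, ← mulVec_add]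
    congr 1; ext n; push_cast; simp only [Pi.add_apply, Pi.smul_apply, smul_eq_mul]; ring
  have hperp : ∀ z : ℂ, ⟪z, (((2 * π * c : ℝ) : ℂ) * Complex.I) * z⟫_ℝ = 0 := fun z => by
    rw [Complex.inner, mul_assoc, Complex.mul_conj, Complex.re_mul_ofReal]; simp
  have hderiv : deriv (residP P) f = 2 * ∑ n, ⟪v n, u n⟫_ℝ := by
    rw [(hasDerivAt_residP P f).deriv, hsplit, Finset.mul_sum]
    refine Finset.sum_congr rfl fun n _ => ?_
    rw [Pi.add_apply, Pi.smul_apply, smul_eq_mul, inner_add_right, hperp, add_zero]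
  have hu : √(∑ n, ‖u n‖ ^ 2) ≤ 2 * π * √(∑ n : Fin N, ((n : ℝ) - c) ^ 2) := by
    have : ∑ n, ‖u n‖ ^ 2 ≤ (2 * π) ^ 2 * ∑ n : Fin N, ((n : ℝ) - c) ^ 2 := by
      refine (sum_norm_sq_mulVec_le hP _).trans_eq ?_
      rw [Finset.mul_sum]
      refine Finset.sum_congr rfl fun n _ => ?_
      simp only [norm_mul, norm_eVec_apply, Complex.norm_real, Real.norm_eq_abs, Complex.norm_I,
        Complex.norm_ofNat, abs_of_pos Real.pi_pos, mul_one]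
      rw [← sq_abs ((n : ℝ) - c)]; ring
    calc √(∑ n, ‖u n‖ ^ 2) ≤ √((2 * π) ^ 2 * ∑ n : Fin N, ((n : ℝ) - c) ^ 2) :=
          Real.sqrt_le_sqrt this
      _ = 2 * π * √(∑ n : Fin N, ((n : ℝ) - c) ^ 2) := by
          rw [Real.sqrt_mul (by positivity), Real.sqrt_sq (by positivity)]
  rw [hderiv, abs_mul, abs_two, residP_eq_sum_norm_sq_mulVec]
  calc 2 * |∑ n, ⟪v n, u n⟫_ℝ| ≤ 2 * (√(∑ n, ‖v n‖ ^ 2) * √(∑ n, ‖u n‖ ^ 2)) := by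
        gcongr; exact abs_sum_real_inner_le v u
    _ ≤ 2 * (√(∑ n, ‖v n‖ ^ 2) * (2 * π * √(∑ n : Fin N, ((n : ℝ) - c) ^ 2))) := by gcongr
    _ = 4 * π * √(∑ n : Fin N, ((n : ℝ) - c) ^ 2) * √(∑ n, ‖v n‖ ^ 2) := by ring

theorem sum_sq_sub_half_le (N : ℕ) : ∑ n : Fin N, ((n : ℝ) - N / 2) ^ 2 ≤ (N : ℝ) ^ 3 / 4 := by
  calc ∑ n : Fin N, ((n : ℝ) - N / 2) ^ 2 ≤ ∑ _n : Fin N, ((N : ℝ) / 2) ^ 2 := by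
        refine Finset.sum_le_sum fun n _ => ?_
        have : (n : ℝ) + 1 ≤ N := by exact_mod_cast n.isLt
        exact sq_le_sq' (by linarith [Nat.cast_nonneg (α := ℝ) (n : ℕ)]) (by linarith)
    _ = (N : ℝ) ^ 3 / 4 := by
        simp only [Finset.sum_const, Finset.card_univ, Fintype.card_fin, nsmul_eq_mul]; ring

theorem sq_le_mul_integral_of_abs_deriv_le {R : ℝ → ℝ} {K c N W x : ℝ}
    (hR : Differentiable ℝ R) (hR0 : ∀ x, 0 ≤ R x) (hK : 0 ≤ K)
    (hderiv : ∀ x, |deriv R x| ≤ 2 * K * √(R x)) (hc : 0 < c) (hRx : R x ≤ N)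
    (hKN : K * √N ≤ c * N ^ 2) (hW0 : 0 ≤ W) (hW : 1 / (4 * c * N) ≤ W) (hx : x ∈ Icc (-W) W) :
    R x ^ 2 ≤ 4 * c * N ^ 2 * ∫ y in (-W)..W, R y := by
  have hs := Real.sq_sqrt (hR0 x)
  have key := sq_sq_le_of_forall_mul_sub_le hc (Real.sqrt_nonneg (R x)) (by rwa [hs])
    ((mul_le_mul_of_nonneg_left (Real.sqrt_le_sqrt hRx) hK).trans hKN) hW0 hW
    fun τ hτ => by simpa only [hs] using mul_sub_le_integral_of_le_two_mul hR hR0 hK hderiv hx hτ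
  rwa [hs] at key

theorem residP_nonneg {N : ℕ} (P : Matrix (Fin N) (Fin N) ℂ) (f : ℝ) : 0 ≤ residP P f := by
  unfold residP; positivity

theorem residP_sq_le {N q : ℕ} {U : Matrix (Fin N) (Fin q) ℂ} (hU : Uᴴ * U = 1) {W f : ℝ}
    (hW0 : 0 ≤ W) (hW : 1 / (4 * π * N) ≤ W) (hf : f ∈ Icc (-W) W) :
    residP (U * Uᴴ) f ^ 2 ≤ 4 * π * N ^ 2 * ∫ g in (-W)..W, residP (U * Uᴴ) g := by
  have hP := conjTranspose_mul_self_one_sub_mul_conjTranspose hU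
  have hN : 0 ≤ (N : ℝ) := Nat.cast_nonneg N
  have hV : √(∑ n : Fin N, ((n : ℝ) - N / 2) ^ 2) ≤ N * √N / 2 := by
    rw [Real.sqrt_le_iff, div_pow, mul_pow, Real.sq_sqrt hN]
    exact ⟨by positivity, (sum_sq_sub_half_le N).trans_eq (by ring)⟩
  refine sq_le_mul_integral_of_abs_deriv_le (K := π * N * √N)
    (fun g => (hasDerivAt_residP _ g).differentiableAt) (residP_nonneg _) (by positivity)
    (fun g => ?_) Real.pi_pos (residP_le hP f) ?_ hW0 hW hf
  · calc |deriv (residP (U * Uᴴ)) g|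
        ≤ 4 * π * √(∑ n : Fin N, ((n : ℝ) - N / 2) ^ 2) * √(residP (U * Uᴴ) g) :=
          abs_deriv_residP_le hP _ g
      _ ≤ 4 * π * (N * √N / 2) * √(residP (U * Uᴴ) g) := by gcongr
      _ = 2 * (π * N * √N) * √(residP (U * Uᴴ) g) := by ring
  · exact le_of_eq (by rw [mul_assoc, Real.mul_self_sqrt hN]; ring)

theorem stmt15_general (N q : ℕ)
    (U : Matrix (Fin N) (Fin q) ℂ) (hU : Uᴴ * U = 1)
    (W : ℝ) (hW : W ∈ Set.Ioo (0 : ℝ) (1 / 2))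
    (hW2 : 1 / (4 * Real.pi * N) ≤ W) :
    ∀ f ∈ Set.Icc (-W) W,
      residP (U * Uᴴ) f / (∑ n, ‖eVec N f n‖ ^ 2)
        ≤ max
            (2 * Real.sqrt Real.pi *
              Real.sqrt (∫ g in (-W)..W, residP (U * Uᴴ) g))
            ((1 / (N * W)) * ∫ g in (-W)..W, residP (U * Uᴴ) g) := by
  intro f hf
  set A := ∫ g in (-W)..W, residP (U * Uᴴ) g
  have hA : 0 ≤ A := integral_nonneg (by linarith [hW.1]) fun g _ => residP_nonneg _ g
  have hR : residP (U * Uᴴ) f ≤ 2 * √π * √A * N := by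
    refine le_of_pow_le_pow_left₀ two_ne_zero (by positivity) ?_
    calc residP (U * Uᴴ) f ^ 2 ≤ 4 * π * N ^ 2 * A := residP_sq_le hU hW.1.le hW2 hf
      _ = (2 * √π * √A * N) ^ 2 := by
        rw [mul_pow, mul_pow, mul_pow, Real.sq_sqrt Real.pi_pos.le, Real.sq_sqrt hA]; ring
  rw [sum_sq_norm_eVec]
  exact le_max_of_le_left (div_le_of_le_mul₀ (Nat.cast_nonneg N) (by positivity) hR)

/-- for an orthonormal basis `U` and `W ≥ 1/(4πN)`, the pointwise
relative residual is controlled by the average residual: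
`‖e_f − UU*e_f‖₂²/‖e_f‖₂²
  ≤ max(2√π √(∫‖e_g − UU*e_g‖₂² dg), (1/(NW)) ∫‖e_g − UU*e_g‖₂² dg)`. -/
theorem stmt15 (N q : ℕ) (hq1 : 1 ≤ q) (hqN : q ≤ N)
    (U : Matrix (Fin N) (Fin q) ℂ) (hU : Uᴴ * U = 1)
    (W : ℝ) (hW : W ∈ Set.Ioo (0 : ℝ) (1 / 2))
    (hW2 : 1 / (4 * Real.pi * N) ≤ W) :
    ∀ f ∈ Set.Icc (-W) W,
      residP (U * Uᴴ) f / (∑ n, ‖eVec N f n‖ ^ 2)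
        ≤ max
            (2 * Real.sqrt Real.pi *
              Real.sqrt (∫ g in (-W)..W, residP (U * Uᴴ) g))
            ((1 / (N * W)) * ∫ g in (-W)..W, residP (U * Uᴴ) g) :=
  stmt15_general N q U hU W hW hW2

end
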